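/- arXiv:1708.02671 — 4 statements merged into one kernel-verified Lean document; each statement's English description precedes it below -/
import Mathlib

section
/- Let g : ℂ → ℂ be a function, let u be a complex number with |u| = 1, and let X = (x₀, x₁, x₂, ...) be an infinite strictly increasing arithmetic progression of real numbers with x₀ = 0. Suppose (φ₀, φ₁, φ₂, ...) is a sequence of complex numbers such that for every n, φₙ is a fixed point of the map s ↦ g(s)·exp(xₙ·u·s), i.e. φₙ = g(φₙ)·exp(xₙ·u·φₙ). If the sequence (φₙ) converges to a complex number λ, g is continuous at λ, and Re(λ)·Re(u) − Im(λ)·Im(u) > 0, then g(λ) = 0. -/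
/-! Solving the fixed-point equation for `g (φ n)` gives
`‖g (φ n)‖ = ‖φ n‖ · exp (-xₙ · Re (u φ n))`. Since `Re (u φ n) → Re (u λ) > 0` while `xₙ → ∞`,
the right-hand side tends to `‖λ‖ · 0 = 0`, and continuity of `g` at `λ` gives `g λ = 0`. -/

open Filter Topology

lemma norm_eq_of_eq_mul_exp {t : ℝ} {u w z : ℂ} (h : z = w * Complex.exp (t * u * z)) :
    ‖w‖ = ‖z‖ * Real.exp (-(t * (u * z).re)) := by
  have hw : w = z * Complex.exp (-(t * u * z)) := by
    rw [Complex.exp_neg, eq_mul_inv_iff_mul_eq₀ (Complex.exp_ne_zero _), ← h]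
  rw [hw, norm_mul, Complex.norm_exp]
  congr 2
  simp only [Complex.neg_re, Complex.mul_re, Complex.mul_im, Complex.ofReal_re,
    Complex.ofReal_im]
  ring

theorem eq_zero_of_tendsto_fixedPoints {ι : Type*} {F : Filter ι} [F.NeBot]
    {g : ℂ → ℂ} {u l : ℂ} {t : ι → ℝ} {φ : ι → ℂ}
    (hφ : ∀ i, φ i = g (φ i) * Complex.exp (t i * u * φ i))
    (ht : Tendsto t F atTop) (hlim : Tendsto φ F (𝓝 l)) (hg : ContinuousAt g l)
    (hre : 0 < (u * l).re) : g l = 0 := by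
  have hre_lim : Tendsto (fun i => (u * φ i).re) F (𝓝 (u * l).re) :=
    (Complex.continuous_re.tendsto _).comp (hlim.const_mul u)
  have hdecay : Tendsto (fun i => Real.exp (-(t i * (u * φ i).re))) F (𝓝 0) :=
    Real.tendsto_exp_atBot.comp (tendsto_neg_atTop_atBot.comp (ht.atTop_mul_pos hre hre_lim))
  have hnorm : Tendsto (fun i => ‖g (φ i)‖) F (𝓝 0) := by
    simpa only [norm_eq_of_eq_mul_exp (hφ _), mul_zero] using hlim.norm.mul hdecay
  exact tendsto_nhds_unique (hg.tendsto.comp hlim) (tendsto_zero_iff_norm_tendsto_zero.mpr hnorm)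

theorem stmt_0_general (g : ℂ → ℂ) (u : ℂ)
    (d : ℝ) (hd : 0 < d) (x : ℕ → ℝ) (hx : ∀ n, x n = n * d)
    (φ : ℕ → ℂ)
    (hφ : ∀ n, φ n = g (φ n) * Complex.exp ((x n : ℂ) * u * φ n))
    (l : ℂ) (hlim : Filter.Tendsto φ Filter.atTop (nhds l))
    (hg : ContinuousAt g l)
    (hre : l.re * u.re - l.im * u.im > 0) :
    g l = 0 := by
  have hx_top : Tendsto x atTop atTop := by
    simpa only [funext hx] using tendsto_natCast_atTop_atTop.atTop_mul_const hd
  refine eq_zero_of_tendsto_fixedPoints hφ hx_top hlim hg ?_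
  rw [Complex.mul_re]
  linarith

/-- If `g : ℂ → ℂ`, `u` is a unit-modulus complex number,
`X = (x n)` is a strictly increasing arithmetic progression of reals with `x 0 = 0`
(so `x n = n * d` for a positive common difference `d`), `(φ n)` is a sequence with
`φ n = g (φ n) * exp (x n * u * φ n)` for all `n`, `(φ n)` converges to `l`,
`g` is continuous at `l`, and `Re l * Re u - Im l * Im u > 0`, then `g l = 0`. -/
theorem stmt_0 (g : ℂ → ℂ) (u : ℂ) (hu : ‖u‖ = 1)
    (d : ℝ) (hd : 0 < d) (x : ℕ → ℝ) (hx : ∀ n, x n = n * d)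
    (φ : ℕ → ℂ)
    (hφ : ∀ n, φ n = g (φ n) * Complex.exp ((x n : ℂ) * u * φ n))
    (l : ℂ) (hlim : Filter.Tendsto φ Filter.atTop (nhds l))
    (hg : ContinuousAt g l)
    (hre : l.re * u.re - l.im * u.im > 0) :
    g l = 0 :=
  stmt_0_general g u d hd x hx φ hφ l hlim hg hre
end

section
/- Let g : ℂ → ℂ be a function, let u be a complex number with |u| = 1, and let (xₙ) be a sequence of real numbers tending to +∞. Suppose (φₙ) is a sequence of complex numbers with φₙ = g(φₙ)·exp(xₙ·u·φₙ) for every n. If (φₙ) converges to a complex number λ, g is continuous at λ, and Re(u·λ) > 0, then g(λ) = 0. -/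
/-!
Taking norms in `φ n = g (φ n) * exp (x n * u * φ n)` gives
`‖g (φ n)‖ = ‖φ n‖ * exp (-(x n * Re (u * φ n)))`. Since `Re (u * φ n) → Re (u * l) > 0` and
`x n → ∞`, the right side tends to `0`, while continuity of `g` gives `g (φ n) → g l`.
-/

open Filter Topology

lemma Complex.norm_eq_norm_mul_exp_neg_re_of_eq_mul_exp {a s z : ℂ} (h : s = a * Complex.exp z) :
    ‖a‖ = ‖s‖ * Real.exp (-z.re) := by
  rw [h, norm_mul, Complex.norm_exp, mul_assoc, ← Real.exp_add, add_neg_cancel, Real.exp_zero,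
    mul_one]

lemma Complex.tendsto_re_ofReal_mul_atTop {α : Type*} {f : Filter α} {x : α → ℝ} {w : α → ℂ}
    {c : ℂ} (hx : Tendsto x f atTop) (hw : Tendsto w f (𝓝 c)) (hc : 0 < c.re) :
    Tendsto (fun i => ((x i : ℂ) * w i).re) f atTop := by
  simp only [Complex.re_ofReal_mul]
  exact hx.atTop_mul_pos hc (Complex.continuous_re.tendsto c |>.comp hw)

lemma Complex.tendsto_zero_of_eq_mul_exp {α : Type*} {f : Filter α} {a s z : α → ℂ} {l : ℂ}
    (h : ∀ i, s i = a i * Complex.exp (z i)) (hs : Tendsto s f (𝓝 l))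
    (hz : Tendsto (fun i => (z i).re) f atTop) :
    Tendsto a f (𝓝 0) := by
  have hexp : Tendsto (fun i => Real.exp (-(z i).re)) f (𝓝 0) :=
    Real.tendsto_exp_atBot.comp (tendsto_neg_atTop_atBot.comp hz)
  have hnorm : Tendsto (fun i => ‖s i‖ * Real.exp (-(z i).re)) f (𝓝 0) := by
    simpa using hs.norm.mul hexp
  rw [tendsto_zero_iff_norm_tendsto_zero]
  simpa only [Complex.norm_eq_norm_mul_exp_neg_re_of_eq_mul_exp (h _)] using hnorm

theorem stmt_1_general (g : ℂ → ℂ) (u : ℂ)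
    (x : ℕ → ℝ) (hx : Filter.Tendsto x Filter.atTop Filter.atTop)
    (φ : ℕ → ℂ)
    (hφ : ∀ n, φ n = g (φ n) * Complex.exp ((x n : ℂ) * u * φ n))
    (l : ℂ) (hlim : Filter.Tendsto φ Filter.atTop (nhds l))
    (hg : ContinuousAt g l)
    (hre : (u * l).re > 0) :
    g l = 0 := by
  have hexponent : Tendsto (fun n => ((x n : ℂ) * u * φ n).re) atTop atTop := by
    simpa only [mul_assoc] using
      Complex.tendsto_re_ofReal_mul_atTop hx (hlim.const_mul u) hre
  have hvanish : Tendsto (fun n => g (φ n)) atTop (𝓝 0) :=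
    Complex.tendsto_zero_of_eq_mul_exp hφ hlim hexponent
  exact tendsto_nhds_unique (hg.tendsto.comp hlim) hvanish

/-- If `g : ℂ → ℂ`, `u` has modulus one, `(x n)` is a real sequence
tending to `+∞`, `(φ n)` satisfies `φ n = g (φ n) * exp (x n * u * φ n)` for all `n`,
`(φ n)` converges to `l`, `g` is continuous at `l`, and `Re (u * l) > 0`,
then `g l = 0`. -/
theorem stmt_1 (g : ℂ → ℂ) (u : ℂ) (hu : ‖u‖ = 1)
    (x : ℕ → ℝ) (hx : Filter.Tendsto x Filter.atTop Filter.atTop)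
    (φ : ℕ → ℂ)
    (hφ : ∀ n, φ n = g (φ n) * Complex.exp ((x n : ℂ) * u * φ n))
    (l : ℂ) (hlim : Filter.Tendsto φ Filter.atTop (nhds l))
    (hg : ContinuousAt g l)
    (hre : (u * l).re > 0) :
    g l = 0 :=
  stmt_1_general g u x hx φ hφ l hlim hg hre
end

section
/- Let ζ denote the Riemann zeta function, let u be a complex number with |u| = 1, and let X = (x₀, x₁, x₂, ...) be an infinite strictly increasing arithmetic progression of real numbers with x₀ = 0. Suppose (φₙ) is a sequence of complex numbers such that for every n, φₙ = ζ(φₙ)·exp(xₙ·u·φₙ). If (φₙ) converges to a complex number λ with λ ≠ 1 and Re(λ)·Re(u) − Im(λ)·Im(u) > 0, then ζ(λ) = 0. -/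
open Filter Topology Complex

theorem tendsto_exp_neg_ofReal_mul_nhds_zero {α : Type*} {F : Filter α} {t : α → ℝ} {w : α → ℂ}
    {c : ℂ} (ht : Tendsto t F atTop) (hw : Tendsto w F (𝓝 c)) (hc : 0 < c.re) :
    Tendsto (fun a => exp (-(t a * w a))) F (𝓝 0) := by
  rw [tendsto_exp_nhds_zero_iff]
  simp only [neg_re, re_ofReal_mul]
  exact tendsto_neg_atTop_atBot.comp (ht.atTop_mul_pos hc ((continuous_re.tendsto c).comp hw))

/-- Dividing by the exponential, `f (φ a) = φ a * exp (-(t a * u * φ a)) → l * 0`. -/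
theorem eq_zero_of_tendsto_of_eq_mul_exp {α : Type*} {F : Filter α} [F.NeBot] {f : ℂ → ℂ}
    {φ : α → ℂ} {t : α → ℝ} {u l : ℂ} (hf : ContinuousAt f l) (hφl : Tendsto φ F (𝓝 l))
    (ht : Tendsto t F atTop) (hul : 0 < (u * l).re)
    (hφ : ∀ a, φ a = f (φ a) * exp (t a * u * φ a)) :
    f l = 0 := by
  have hfφ : ∀ a, f (φ a) = φ a * exp (-(t a * (u * φ a))) := fun a => by
    rw [exp_neg, ← div_eq_mul_inv, eq_div_iff (exp_ne_zero _), ← mul_assoc, ← hφ a]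
  have hexp := tendsto_exp_neg_ofReal_mul_nhds_zero ht (hφl.const_mul u) hul
  have hzero : Tendsto (fun a => f (φ a)) F (𝓝 0) := by
    simpa only [hfφ, mul_zero] using hφl.mul hexp
  exact tendsto_nhds_unique (hf.tendsto.comp hφl) hzero

theorem stmt_2_general (u : ℂ)
    (d : ℝ) (hd : 0 < d) (x : ℕ → ℝ) (hx : ∀ n, x n = n * d)
    (φ : ℕ → ℂ)
    (hφ : ∀ n, φ n = riemannZeta (φ n) * Complex.exp ((x n : ℂ) * u * φ n))
    (l : ℂ) (hlim : Filter.Tendsto φ Filter.atTop (nhds l))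
    (hl : l ≠ 1)
    (hre : l.re * u.re - l.im * u.im > 0) :
    riemannZeta l = 0 := by
  obtain rfl : x = fun n : ℕ => n * d := funext hx
  refine eq_zero_of_tendsto_of_eq_mul_exp (differentiableAt_riemannZeta hl).continuousAt hlim
    (tendsto_natCast_atTop_atTop.atTop_mul_const hd) ?_ hφ
  rw [mul_re]
  linarith

/-- Let `ζ` be the Riemann zeta function, `u` a unit-modulus complex
number, and `(x n)` a strictly increasing arithmetic progression of reals with
`x 0 = 0` (so `x n = n * d`, `d > 0`). If `(φ n)` satisfies
`φ n = ζ (φ n) * exp (x n * u * φ n)` for all `n` and converges to `l ≠ 1` with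
`Re l * Re u - Im l * Im u > 0`, then `ζ l = 0`. -/
theorem stmt_2 (u : ℂ) (hu : ‖u‖ = 1)
    (d : ℝ) (hd : 0 < d) (x : ℕ → ℝ) (hx : ∀ n, x n = n * d)
    (φ : ℕ → ℂ)
    (hφ : ∀ n, φ n = riemannZeta (φ n) * Complex.exp ((x n : ℂ) * u * φ n))
    (l : ℂ) (hlim : Filter.Tendsto φ Filter.atTop (nhds l))
    (hl : l ≠ 1)
    (hre : l.re * u.re - l.im * u.im > 0) :
    riemannZeta l = 0 :=
  stmt_2_general u d hd x hx φ hφ l hlim hl hre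
end

section
/- Let ζ denote the Riemann zeta function and let X = (x₀, x₁, x₂, ...) be an infinite strictly increasing arithmetic progression of real numbers with x₀ = 0. Suppose (φₙ) is a sequence of complex numbers such that for every n, φₙ = ζ(φₙ)·exp(xₙ·φₙ). If (φₙ) converges to a complex number λ with λ ≠ 1 and Re(λ) > 0, then λ is a nontrivial zero of ζ lying in the critical strip: ζ(λ) = 0 and 0 < Re(λ) < 1. -/
open Filter Topology Complex

/- If `φ = f φ · exp (x φ)` with `x → ∞` and `φ → λ`, `Re λ > 0`, then `f φ = φ · exp (-x φ)` decays
like `exp (-x Re λ)`, so `f λ = 0` whenever `f` is continuous at `λ`. For `f = ζ`, the nonvanishing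
of `ζ` on `Re s ≥ 1` then places `λ` in the critical strip. -/

section FixedPointLimit

variable {α : Type*} {F : Filter α} {x : α → ℝ} {φ : α → ℂ} {l : ℂ}

theorem tendsto_cexp_neg_mul_nhds_zero (hx : Tendsto x F atTop) (hφ : Tendsto φ F (𝓝 l))
    (hre : 0 < l.re) : Tendsto (fun a => cexp (-((x a : ℂ) * φ a))) F (𝓝 0) := by
  have hxre : Tendsto (fun a => x a * (φ a).re) F atTop :=
    hx.atTop_mul_pos hre ((continuous_re.tendsto l).comp hφ)
  rw [tendsto_zero_iff_norm_tendsto_zero]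
  convert Real.tendsto_exp_atBot.comp (tendsto_neg_atBot_iff.mpr hxre) using 2 with a
  simp [norm_exp, mul_re]

theorem eq_mul_cexp_neg_of_eq_mul_cexp {f : ℂ → ℂ} {t : ℝ} {s : ℂ}
    (h : s = f s * cexp (t * s)) : f s = s * cexp (-(t * s)) := by
  rw [exp_neg, eq_comm, mul_inv_eq_iff_eq_mul₀ (exp_ne_zero _)]
  exact h

theorem eq_zero_of_tendsto_of_eq_mul_cexp {f : ℂ → ℂ} (hf : ContinuousAt f l)
    (hfix : ∀ a, φ a = f (φ a) * cexp ((x a : ℂ) * φ a)) [F.NeBot]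
    (hx : Tendsto x F atTop) (hφ : Tendsto φ F (𝓝 l)) (hre : 0 < l.re) : f l = 0 := by
  have hdecay : Tendsto (fun a => f (φ a)) F (𝓝 0) := by
    simpa [eq_mul_cexp_neg_of_eq_mul_cexp (hfix _)] using
      hφ.mul (tendsto_cexp_neg_mul_nhds_zero hx hφ hre)
  exact tendsto_nhds_unique (hf.tendsto.comp hφ) hdecay

end FixedPointLimit

theorem re_lt_one_of_riemannZeta_eq_zero {s : ℂ} (hs : riemannZeta s = 0) : s.re < 1 :=
  lt_of_not_ge fun h => riemannZeta_ne_zero_of_one_le_re h hs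

/-- Let `ζ` be the Riemann zeta function and `(x n)` a strictly
increasing arithmetic progression of reals with `x 0 = 0` (so `x n = n * d`,
`d > 0`). If `(φ n)` satisfies `φ n = ζ (φ n) * exp (x n * φ n)` for all `n`
and converges to `l ≠ 1` with `Re l > 0`, then `l` is a nontrivial zero of `ζ`
in the critical strip: `ζ l = 0` and `0 < Re l < 1`. -/
theorem stmt_5 (d : ℝ) (hd : 0 < d) (x : ℕ → ℝ) (hx : ∀ n, x n = n * d)
    (φ : ℕ → ℂ)
    (hφ : ∀ n, φ n = riemannZeta (φ n) * Complex.exp ((x n : ℂ) * φ n))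
    (l : ℂ) (hlim : Filter.Tendsto φ Filter.atTop (nhds l))
    (hl : l ≠ 1) (hre : 0 < l.re) :
    riemannZeta l = 0 ∧ 0 < l.re ∧ l.re < 1 := by
  have hxtop : Tendsto x atTop atTop := by
    simpa [funext hx] using tendsto_natCast_atTop_atTop.atTop_mul_const hd
  have hzero : riemannZeta l = 0 :=
    eq_zero_of_tendsto_of_eq_mul_cexp (differentiableAt_riemannZeta hl).continuousAt hφ hxtop
      hlim hre
  exact ⟨hzero, hre, re_lt_one_of_riemannZeta_eq_zero hzero⟩
end
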